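/- arXiv:2303.07591 — 2 statements merged into one kernel-verified Lean document; each statement's English description precedes it below -/
import Mathlib

section
/- For a multi-index α with |α| = n, the polynomial P_α(x) = (|x|²/(4(n+1)!)) · Σ_{k=0}^{⌊n/2⌋} ((-1)^k (n-k)!/(k+1)!) (|x|²/4)^k Δ^k(x^α) defined on ℝ² satisfies Δ P_α = x^α, i.e., P_α is a polynomial anti-Laplacian of the monomial x^α. -/
/-- First pure partial derivative in the first variable. -/
noncomputable def pdx (f : ℝ × ℝ → ℝ) (x : ℝ × ℝ) : ℝ := deriv (fun s => f (s, x.2)) x.1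

/-- First pure partial derivative in the second variable. -/
noncomputable def pdy (f : ℝ × ℝ → ℝ) (x : ℝ × ℝ) : ℝ := deriv (fun s => f (x.1, s)) x.2

/-- The Laplacian on `ℝ²`. -/
noncomputable def lap (f : ℝ × ℝ → ℝ) : ℝ × ℝ → ℝ := fun x => pdx (pdx f) x + pdy (pdy f) x

/-- The monomial `x^α = x₁^{α₁} x₂^{α₂}`. -/
noncomputable def mono (α₁ α₂ : ℕ) : ℝ × ℝ → ℝ := fun x => x.1 ^ α₁ * x.2 ^ α₂

/-!
On polynomials in `N` variables, with `r = ∑ Xᵢ²` and Euler's identity `∑ Xᵢ ∂ᵢ p = d • p` for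
`p` homogeneous of degree `d`, one gets
`Δ (r ^ (k + 1) * p) = 2 (k + 1) (N + 2k + 2d) r ^ k * p + r ^ (k + 1) * Δ p`.
Applied to `p = Δ^k x^α`, homogeneous of degree `n - 2k`, this makes the Laplacian of
`∑ₖ bₖ r^(k+1) Δ^k x^α` telescope as soon as `bₖ` satisfies a two-term recursion: the first term
leaves `x^α` and the last one vanishes because `Δ^(⌊n/2⌋+1) x^α = 0`. For `N = 2` the
coefficients of `P_α` satisfy that recursion. On polynomial functions the partial derivatives
in `lap` are those of `MvPolynomial.pderiv`, which carries the identity over to `ℝ²`.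
-/

namespace MvPolynomial

variable {σ R : Type*}

theorem IsHomogeneous.pderiv_eq_zero [CommSemiring R] {p : MvPolynomial σ R}
    (hp : p.IsHomogeneous 0) (i : σ) : pderiv i p = 0 := by
  rw [totalDegree_eq_zero_iff_eq_C.mp (Nat.le_zero.mp hp.totalDegree_le), pderiv_C]

theorem hasDerivAt_eval_update {𝕜 : Type*} [NontriviallyNormedField 𝕜] [DecidableEq σ]
    (p : MvPolynomial σ 𝕜) (x : σ → 𝕜) (i : σ) :
    HasDerivAt (fun s => eval (Function.update x i s) p) (eval x (pderiv i p)) (x i) := by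
  induction p using MvPolynomial.induction_on with
  | C c => simpa using hasDerivAt_const (x i) c
  | add p q hp hq => simp only [map_add]; exact hp.add hq
  | mul_X p j hp =>
    rcases eq_or_ne j i with rfl | hji
    · have hf : (fun s => eval (Function.update x j s) (p * X j)) =
          fun s => eval (Function.update x j s) p * s := by
        funext s; simp
      rw [hf]
      exact (hp.mul (hasDerivAt_id' (x j))).congr_deriv (by simp [Derivation.leibniz]; ring)
    · have hf : (fun s => eval (Function.update x i s) (p * X j)) =
          fun s => eval (Function.update x i s) p * x j := by
        funext s; simp [Function.update_of_ne hji]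
      rw [hf]
      exact (hp.mul_const (x j)).congr_deriv (by simp [Derivation.leibniz, hji, mul_comm])

variable [Fintype σ]

section CommSemiring

variable [CommSemiring R]

noncomputable def laplacian : MvPolynomial σ R →ₗ[R] MvPolynomial σ R :=
  ∑ i, (pderiv i).toLinearMap ∘ₗ (pderiv i).toLinearMap

theorem laplacian_apply (p : MvPolynomial σ R) :
    laplacian p = ∑ i, pderiv i (pderiv i p) := by
  simp [laplacian, LinearMap.sum_apply]

variable (σ R) in
noncomputable def normSq : MvPolynomial σ R := ∑ i, X i ^ 2

theorem isHomogeneous_normSq : (normSq σ R).IsHomogeneous 2 :=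
  IsHomogeneous.sum _ _ _ fun i _ => isHomogeneous_X_pow i 2

theorem pderiv_normSq (i : σ) : pderiv i (normSq σ R) = 2 * X i := by
  classical
  simp [normSq, pderiv_X, Pi.single_apply]

theorem IsHomogeneous.laplacian {p : MvPolynomial σ R} {n : ℕ} (hp : p.IsHomogeneous n) :
    (MvPolynomial.laplacian p).IsHomogeneous (n - 2) := by
  rw [laplacian_apply]
  exact IsHomogeneous.sum _ _ _ fun i _ => hp.pderiv.pderiv

theorem IsHomogeneous.laplacian_eq_zero {p : MvPolynomial σ R} {n : ℕ} (hp : p.IsHomogeneous n)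
    (hn : n ≤ 1) : MvPolynomial.laplacian p = 0 := by
  have : ∀ i, (pderiv i p).IsHomogeneous 0 := fun i => by
    simpa [Nat.sub_eq_zero_of_le hn] using hp.pderiv (i := i)
  simp [laplacian_apply, fun i => (this i).pderiv_eq_zero i]

theorem IsHomogeneous.laplacian_iterate {p : MvPolynomial σ R} {n : ℕ} (hp : p.IsHomogeneous n)
    (k : ℕ) : (MvPolynomial.laplacian^[k] p).IsHomogeneous (n - 2 * k) := by
  induction k with
  | zero => simpa using hp
  | succ k ih =>
    rw [Function.iterate_succ_apply', show n - 2 * (k + 1) = n - 2 * k - 2 by omega]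
    exact ih.laplacian

theorem laplacian_normSq_mul (p : MvPolynomial σ R) :
    laplacian (normSq σ R * p) =
      (2 * Fintype.card σ : MvPolynomial σ R) * p + 4 * ∑ i, X i * pderiv i p
        + normSq σ R * laplacian p := by
  have hi : ∀ i, pderiv i (pderiv i (normSq σ R * p)) =
      2 * p + 4 * (X i * pderiv i p) + normSq σ R * pderiv i (pderiv i p) := fun i => by
    have h2 : pderiv i (2 : MvPolynomial σ R) = 0 := by
      simpa using (pderiv i).map_natCast 2
    simp only [Derivation.leibniz, pderiv_normSq, smul_eq_mul, map_add, pderiv_X_self, h2]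
    ring
  simp only [laplacian_apply, hi, Finset.sum_add_distrib, ← Finset.mul_sum, Finset.sum_const,
    Finset.card_univ, nsmul_eq_mul]
  ring

theorem IsHomogeneous.laplacian_normSq_pow_mul {p : MvPolynomial σ R} {d : ℕ}
    (hp : p.IsHomogeneous d) (k : ℕ) :
    MvPolynomial.laplacian (normSq σ R ^ (k + 1) * p) =
      ((2 * (k + 1) * (Fintype.card σ + 2 * k + 2 * d) : ℕ) : MvPolynomial σ R) *
          (normSq σ R ^ k * p) + normSq σ R ^ (k + 1) * MvPolynomial.laplacian p := by
  induction k with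
  | zero =>
    rw [pow_one, laplacian_normSq_mul, hp.sum_X_mul_pderiv, nsmul_eq_mul]
    push_cast
    ring
  | succ k ih =>
    have hq := (isHomogeneous_normSq.pow (k + 1)).mul hp
    rw [pow_succ', mul_assoc, laplacian_normSq_mul, hq.sum_X_mul_pderiv, ih, nsmul_eq_mul]
    push_cast
    ring

end CommSemiring

section CommRing

variable [CommRing R]

theorem IsHomogeneous.laplacian_sum_smul_normSq_pow_mul_laplacian_iterate
    {f : MvPolynomial σ R} {n : ℕ} (hf : f.IsHomogeneous n) (b : ℕ → R)
    (hb₀ : ((2 * (Fintype.card σ + 2 * n) : ℕ) : R) * b 0 = 1)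
    (hb : ∀ k < n / 2,
      ((2 * (k + 2) * (Fintype.card σ + 2 * (n - (k + 1))) : ℕ) : R) * b (k + 1) = -b k) :
    MvPolynomial.laplacian (∑ k ∈ Finset.range (n / 2 + 1),
      b k • (normSq σ R ^ (k + 1) * MvPolynomial.laplacian^[k] f)) = f := by
  set Δ : MvPolynomial σ R →ₗ[R] MvPolynomial σ R := MvPolynomial.laplacian
  set r := normSq σ R
  have step : ∀ k ∈ Finset.range (n / 2 + 1), Δ (b k • (r ^ (k + 1) * Δ^[k] f)) =
      (((2 * (k + 1) * (Fintype.card σ + 2 * (n - k)) : ℕ) : R) * b k) • (r ^ k * Δ^[k] f) +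
        b k • (r ^ (k + 1) * Δ^[k + 1] f) := fun k hk => by
    have hkn : 2 * k + 2 * (n - 2 * k) = 2 * (n - k) := by
      rw [Finset.mem_range] at hk; omega
    rw [map_smul, (hf.laplacian_iterate k).laplacian_normSq_pow_mul, add_assoc, hkn,
      ← nsmul_eq_mul, ← Nat.cast_smul_eq_nsmul R, smul_add, smul_smul, mul_comm (b k),
      Function.iterate_succ_apply']
  have top : Δ^[n / 2 + 1] f = 0 := by
    rw [Function.iterate_succ_apply']
    exact (hf.laplacian_iterate _).laplacian_eq_zero (by omega)
  have cancel : ∀ k ∈ Finset.range (n / 2),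
      (((2 * (k + 1 + 1) * (Fintype.card σ + 2 * (n - (k + 1))) : ℕ) : R) * b (k + 1)) •
        (r ^ (k + 1) * Δ^[k + 1] f) = -(b k • (r ^ (k + 1) * Δ^[k + 1] f)) := fun k hk => by
    rw [hb k (Finset.mem_range.mp hk), neg_smul]
  rw [map_sum, Finset.sum_congr rfl step, Finset.sum_add_distrib, Finset.sum_range_succ',
    Finset.sum_range_succ, Finset.sum_congr rfl cancel, top, Finset.sum_neg_distrib]
  push_cast at hb₀
  simp [hb₀]

end CommRing

end MvPolynomial

open MvPolynomial

noncomputable def evalProd (p : MvPolynomial (Fin 2) ℝ) (x : ℝ × ℝ) : ℝ := eval ![x.1, x.2] p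

theorem pdx_evalProd (p : MvPolynomial (Fin 2) ℝ) : pdx (evalProd p) = evalProd (pderiv 0 p) := by
  funext x
  have hupd : ∀ s, Function.update ![x.1, x.2] 0 s = ![s, x.2] := fun s => by
    ext j; fin_cases j <;> simp
  have h := hasDerivAt_eval_update p ![x.1, x.2] 0
  simp only [hupd, Matrix.cons_val_zero] at h
  exact h.deriv

theorem pdy_evalProd (p : MvPolynomial (Fin 2) ℝ) : pdy (evalProd p) = evalProd (pderiv 1 p) := by
  funext x
  have hupd : ∀ s, Function.update ![x.1, x.2] 1 s = ![x.1, s] := fun s => by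
    ext j; fin_cases j <;> simp
  have h := hasDerivAt_eval_update p ![x.1, x.2] 1
  simp only [hupd, Matrix.cons_val_one] at h
  exact h.deriv

theorem lap_evalProd (p : MvPolynomial (Fin 2) ℝ) : lap (evalProd p) = evalProd (laplacian p) := by
  funext x
  simp [lap, pdx_evalProd, pdy_evalProd, laplacian_apply, Fin.sum_univ_two, evalProd]

theorem lap_iterate_evalProd (p : MvPolynomial (Fin 2) ℝ) (k : ℕ) :
    lap^[k] (evalProd p) = evalProd (laplacian^[k] p) :=
  ((Function.Semiconj.iterate_right (fun q => (lap_evalProd q).symm) k) p).symm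

theorem mono_eq_evalProd (α₁ α₂ : ℕ) : mono α₁ α₂ = evalProd (X 0 ^ α₁ * X 1 ^ α₂) := by
  funext x
  simp [mono, evalProd]

open Nat in
/-- The coefficient of `|x|^(2(k+1)) Δ^k x^α` in `P_α`. -/
noncomputable def antiLaplacianCoeff (n k : ℕ) : ℝ :=
  (-1) ^ k * (n - k)! / ((k + 1)! * 4 ^ (k + 1) * (n + 1)!)

theorem antiLaplacianCoeff_zero (n : ℕ) :
    ((2 * (2 + 2 * n) : ℕ) : ℝ) * antiLaplacianCoeff n 0 = 1 := by
  rw [antiLaplacianCoeff, Nat.sub_zero, Nat.factorial_succ n]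
  push_cast
  field_simp
  ring

theorem antiLaplacianCoeff_succ {n k : ℕ} (hk : k < n / 2) :
    ((2 * (k + 2) * (2 + 2 * (n - (k + 1))) : ℕ) : ℝ) * antiLaplacianCoeff n (k + 1) =
      -antiLaplacianCoeff n k := by
  obtain ⟨m, rfl⟩ : ∃ m, n = m + (k + 1) := ⟨n - (k + 1), by omega⟩
  rw [antiLaplacianCoeff, antiLaplacianCoeff, Nat.add_sub_cancel,
    show m + (k + 1) - k = m + 1 by omega, Nat.factorial_succ m, Nat.factorial_succ (k + 1)]
  push_cast
  field_simp
  ring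

/-- The polynomial
`P_α(x) = (|x|²/(4(n+1)!)) · Σ_{k=0}^{⌊n/2⌋} ((-1)^k (n-k)!/(k+1)!) (|x|²/4)^k Δ^k(x^α)`
is an anti-Laplacian of the monomial `x^α`, where `n = |α| = α₁ + α₂`. -/
theorem anti_laplacian_of_monomial (α₁ α₂ : ℕ) :
    let n := α₁ + α₂
    let P : ℝ × ℝ → ℝ := fun x =>
      ((x.1 ^ 2 + x.2 ^ 2) / (4 * (Nat.factorial (n + 1) : ℝ))) *
        ∑ k ∈ Finset.range (n / 2 + 1),
          ((-1 : ℝ) ^ k * (Nat.factorial (n - k) : ℝ) / (Nat.factorial (k + 1) : ℝ)) *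
            ((x.1 ^ 2 + x.2 ^ 2) / 4) ^ k * (lap^[k] (mono α₁ α₂) x)
    ∀ x : ℝ × ℝ, lap P x = mono α₁ α₂ x := by
  intro n P x
  have hf : (X 0 ^ α₁ * X 1 ^ α₂ : MvPolynomial (Fin 2) ℝ).IsHomogeneous n :=
    (isHomogeneous_X_pow 0 α₁).mul (isHomogeneous_X_pow 1 α₂)
  have hP : P = evalProd (∑ k ∈ Finset.range (n / 2 + 1), antiLaplacianCoeff n k •
      (normSq (Fin 2) ℝ ^ (k + 1) * laplacian^[k] (X 0 ^ α₁ * X 1 ^ α₂))) := by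
    funext y
    simp only [P, mono_eq_evalProd, lap_iterate_evalProd, evalProd, map_sum, smul_eval,
      Finset.mul_sum, map_mul, map_pow, map_add, normSq, Fin.sum_univ_two, eval_X,
      Matrix.cons_val_zero, Matrix.cons_val_one, antiLaplacianCoeff, div_pow]
    refine Finset.sum_congr rfl fun k _ => ?_
    field_simp
    ring
  rw [hP, lap_evalProd, hf.laplacian_sum_smul_normSq_pow_mul_laplacian_iterate _
    (by simpa using antiLaplacianCoeff_zero n)
    (fun k hk => by simpa using antiLaplacianCoeff_succ hk), mono_eq_evalProd]
end

section
/- If ρ and ρ̂ are differentiable functions on an open subset of ℝ² with ∇ρ = (φ, -φ̂) and ∇ρ̂ = (φ̂, φ) for C¹ functions φ, φ̂, then Φ(x) = (x₁ ρ(x) + x₂ ρ̂(x))/4 satisfies ΔΦ = φ, provided φ and φ̂ satisfy the Cauchy–Riemann equations ∂φ/∂x₁ = ∂φ̂/∂x₂, ∂φ/∂x₂ = -∂φ̂/∂x₁. -/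
open Set Filter Topology

section PartialDerivatives

variable {f g : ℝ × ℝ → ℝ} {x : ℝ × ℝ}

theorem DifferentiableAt.hasDerivAt_pdx (hf : DifferentiableAt ℝ f x) :
    HasDerivAt (fun s => f (s, x.2)) (pdx f x) x.1 :=
  (hf.comp x.1 (differentiableAt_id.prodMk (differentiableAt_const _))).hasDerivAt

theorem DifferentiableAt.hasDerivAt_pdy (hf : DifferentiableAt ℝ f x) :
    HasDerivAt (fun s => f (x.1, s)) (pdy f x) x.2 :=
  (hf.comp x.2 ((differentiableAt_const _).prodMk differentiableAt_id)).hasDerivAt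

theorem pdx_add (hf : DifferentiableAt ℝ f x) (hg : DifferentiableAt ℝ g x) :
    pdx (fun y => f y + g y) x = pdx f x + pdx g x :=
  (hf.hasDerivAt_pdx.add hg.hasDerivAt_pdx).deriv

theorem pdy_add (hf : DifferentiableAt ℝ f x) (hg : DifferentiableAt ℝ g x) :
    pdy (fun y => f y + g y) x = pdy f x + pdy g x :=
  (hf.hasDerivAt_pdy.add hg.hasDerivAt_pdy).deriv

theorem pdx_div_const (c : ℝ) : pdx (fun y => f y / c) x = pdx f x / c :=
  deriv_div_const c

theorem pdy_div_const (c : ℝ) : pdy (fun y => f y / c) x = pdy f x / c :=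
  deriv_div_const c

theorem pdy_neg : pdy (fun y => -f y) x = -pdy f x :=
  deriv.fun_neg

theorem pdx_congr_of_eqOn {U : Set (ℝ × ℝ)} (hU : IsOpen U) (hfg : EqOn f g U) (hx : x ∈ U) :
    pdx f x = pdx g x := by
  have hslice : {s : ℝ | (s, x.2) ∈ U} ∈ 𝓝 x.1 :=
    (hU.preimage (continuous_id.prodMk continuous_const)).mem_nhds hx
  exact EventuallyEq.deriv_eq (eventually_of_mem hslice fun s hs => hfg hs)

theorem pdy_congr_of_eqOn {U : Set (ℝ × ℝ)} (hU : IsOpen U) (hfg : EqOn f g U) (hx : x ∈ U) :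
    pdy f x = pdy g x := by
  have hslice : {s : ℝ | (x.1, s) ∈ U} ∈ 𝓝 x.2 :=
    (hU.preimage (continuous_const.prodMk continuous_id)).mem_nhds hx
  exact EventuallyEq.deriv_eq (eventually_of_mem hslice fun s hs => hfg hs)

theorem pdx_fst_mul_add_snd_mul (hf : DifferentiableAt ℝ f x) (hg : DifferentiableAt ℝ g x) :
    pdx (fun y => y.1 * f y + y.2 * g y) x = f x + (x.1 * pdx f x + x.2 * pdx g x) := by
  have h := ((hasDerivAt_id' x.1).fun_mul hf.hasDerivAt_pdx).fun_add
    (hg.hasDerivAt_pdx.const_mul x.2)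
  exact h.deriv.trans (by ring)

theorem pdy_fst_mul_add_snd_mul (hf : DifferentiableAt ℝ f x) (hg : DifferentiableAt ℝ g x) :
    pdy (fun y => y.1 * f y + y.2 * g y) x = g x + (x.1 * pdy f x + x.2 * pdy g x) := by
  have h := (hf.hasDerivAt_pdy.const_mul x.1).fun_add
    ((hasDerivAt_id' x.2).fun_mul hg.hasDerivAt_pdy)
  exact h.deriv.trans (by ring)

end PartialDerivatives

/-- If `∇ρ = (φ, -φ̂)` and `∇ρ̂ = (φ̂, φ)` on an open set `U ⊆ ℝ²`, where `φ, φ̂` are `C¹`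
and satisfy the Cauchy–Riemann equations, then `Φ(x) = (x₁ ρ(x) + x₂ ρ̂(x))/4` satisfies
`ΔΦ = φ` on `U`. -/
theorem anti_laplacian_from_conjugates
    (U : Set (ℝ × ℝ)) (hU : IsOpen U)
    (φ φhat ρ ρhat : ℝ × ℝ → ℝ)
    (hφ : ContDiffOn ℝ 1 φ U) (hφhat : ContDiffOn ℝ 1 φhat U)
    (hρ : DifferentiableOn ℝ ρ U) (hρhat : DifferentiableOn ℝ ρhat U)
    (hgradρ : ∀ y ∈ U, pdx ρ y = φ y ∧ pdy ρ y = -φhat y)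
    (hgradρhat : ∀ y ∈ U, pdx ρhat y = φhat y ∧ pdy ρhat y = φ y)
    (hCR : ∀ y ∈ U, pdx φ y = pdy φhat y ∧ pdy φ y = -pdx φhat y) :
    ∀ x ∈ U, lap (fun y => (y.1 * ρ y + y.2 * ρhat y) / 4) x = φ x := by
  have hdiff {f : ℝ × ℝ → ℝ} (hf : DifferentiableOn ℝ f U) {y : ℝ × ℝ} (hy : y ∈ U) :
      DifferentiableAt ℝ f y :=
    hf.differentiableAt (hU.mem_nhds hy)
  have hpdx : EqOn (pdx fun y => (y.1 * ρ y + y.2 * ρhat y) / 4)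
      (fun y => (ρ y + (y.1 * φ y + y.2 * φhat y)) / 4) U := fun y hy => by
    rw [pdx_div_const, pdx_fst_mul_add_snd_mul (hdiff hρ hy) (hdiff hρhat hy),
      (hgradρ y hy).1, (hgradρhat y hy).1]
  have hpdy : EqOn (pdy fun y => (y.1 * ρ y + y.2 * ρhat y) / 4)
      (fun y => (ρhat y + (y.1 * -φhat y + y.2 * φ y)) / 4) U := fun y hy => by
    rw [pdy_div_const, pdy_fst_mul_add_snd_mul (hdiff hρ hy) (hdiff hρhat hy),
      (hgradρ y hy).2, (hgradρhat y hy).2]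
  intro x hx
  have hφx := hdiff (hφ.differentiableOn one_ne_zero) hx
  have hφhatx := hdiff (hφhat.differentiableOn one_ne_zero) hx
  have hxx := pdx_congr_of_eqOn hU hpdx hx
  rw [pdx_div_const, pdx_add (hdiff hρ hx) (by fun_prop), pdx_fst_mul_add_snd_mul hφx hφhatx,
    (hgradρ x hx).1] at hxx
  have hyy := pdy_congr_of_eqOn hU hpdy hx
  rw [pdy_div_const, pdy_add (hdiff hρhat hx) (by fun_prop),
    pdy_fst_mul_add_snd_mul (f := fun y => -φhat y) hφhatx.neg hφx, pdy_neg,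
    (hgradρhat x hx).2] at hyy
  rw [lap, hxx, hyy, (hCR x hx).1, (hCR x hx).2]
  ring
end
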